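/- Let A be a commutative unital ℝ-algebra, let y_0 ∈ ℝ^d, and let ε_1, …, ε_d ∈ A be nilpotent elements. Define the Grassmannian analytic continuation map φ : C^∞(ℝ^d, ℝ) → A by φ(f) := Σ_{α ∈ ℕ^d} (1/α!) (∂^α f)(y_0) · ε^α, where ε^α := ε_1^{α_1} ⋯ ε_d^{α_d} and the sum is finite because each ε_b is nilpotent. Then φ is an ℝ-algebra homomorphism: it is ℝ-linear, φ(1) = 1, and φ(f·g) = φ(f)·φ(g) for all smooth f, g : ℝ^d → ℝ. -/

import Mathlib

/-- Partial derivative of a real-valued function on `ℝ^d` with respect to the `a`-th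
coordinate. -/
noncomputable def pderiv {d : ℕ} (a : Fin d) (g : (Fin d → ℝ) → ℝ) : (Fin d → ℝ) → ℝ :=
  fun x => fderiv ℝ g x (Pi.single a 1)

/-- The iterated partial derivative `∂^α f` for a multi-index `α : Fin d → ℕ`. -/
noncomputable def multiPDeriv {d : ℕ} (α : Fin d → ℕ) (f : (Fin d → ℝ) → ℝ) :
    (Fin d → ℝ) → ℝ :=
  (List.finRange d).foldl (fun h b => (pderiv b)^[α b] h) f

/-- The Grassmannian analytic continuation of `f : ℝ^d → ℝ` at the point `y₀` with nilpotent
supplements `ε₁, …, ε_d` in a commutative `ℝ`-algebra `A`: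
`φ(f) = ∑_{α ∈ ℕ^d} (1/α!) (∂^α f)(y₀) • ε^α`.
(The sum is a `finsum`; when each `ε b` is nilpotent only finitely many terms are nonzero.) -/
noncomputable def grassmannCont {d : ℕ} (A : Type*) [CommRing A] [Algebra ℝ A]
    (y₀ : Fin d → ℝ) (ε : Fin d → A) (f : (Fin d → ℝ) → ℝ) : A :=
  ∑ᶠ α : Fin d → ℕ,
    ((((∏ b, (α b).factorial : ℕ) : ℝ))⁻¹ * multiPDeriv α f y₀) • ∏ b, ε b ^ α b

variable {d : ℕ}

lemma contDiff_pderiv {a : Fin d} {f : (Fin d → ℝ) → ℝ} (hf : ContDiff ℝ (⊤ : ℕ∞) f) :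
    ContDiff ℝ (⊤ : ℕ∞) (pderiv a f) := by
  have h1 : ContDiff ℝ (⊤ : ℕ∞) (fderiv ℝ f) := hf.fderiv_right (by simp)
  exact (ContinuousLinearMap.apply ℝ ℝ (Pi.single a 1)).contDiff.comp h1

lemma pderiv_mul {a : Fin d} {f g : (Fin d → ℝ) → ℝ} (hf : Differentiable ℝ f)
    (hg : Differentiable ℝ g) :
    pderiv a (fun x => f x * g x) = fun x => pderiv a f x * g x + f x * pderiv a g x := by
  funext x
  simp only [pderiv, fderiv_fun_mul (hf x) (hg x), ContinuousLinearMap.add_apply,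
    ContinuousLinearMap.smul_apply, smul_eq_mul]
  ring

lemma pderiv_const {a : Fin d} (c : ℝ) : pderiv a (fun _ => c) = fun _ => 0 := by
  funext x; simp [pderiv]

lemma pderiv_lin {a : Fin d} {f g : (Fin d → ℝ) → ℝ} (hf : Differentiable ℝ f)
    (hg : Differentiable ℝ g) (c : ℝ) :
    pderiv a (fun x => c * f x + g x) = fun x => c * pderiv a f x + pderiv a g x := by
  funext x
  simp only [pderiv]
  rw [fderiv_fun_add ((hf x).const_mul c) (hg x), fderiv_const_mul (hf x)]
  simp

lemma pderiv_sum {a : Fin d} {ι : Type*} (s : Finset ι) (F : ι → (Fin d → ℝ) → ℝ)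
    (h : ∀ i ∈ s, Differentiable ℝ (F i)) :
    pderiv a (fun x => ∑ i ∈ s, F i x) = fun x => ∑ i ∈ s, pderiv a (F i) x := by
  funext x
  simp only [pderiv]
  rw [fderiv_fun_sum (fun i hi => (h i hi) x)]
  simp

lemma contDiff_pderiv_iter {a : Fin d} {f : (Fin d → ℝ) → ℝ} (hf : ContDiff ℝ (⊤ : ℕ∞) f) (n : ℕ) :
    ContDiff ℝ (⊤ : ℕ∞) ((pderiv a)^[n] f) := by
  induction n with
  | zero => simpa using hf
  | succ n ih => rw [Function.iterate_succ_apply']; exact contDiff_pderiv ih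

noncomputable def mpd (l : List (Fin d)) (α : Fin d → ℕ) (f : (Fin d → ℝ) → ℝ) :
    (Fin d → ℝ) → ℝ :=
  l.foldl (fun h b => (pderiv b)^[α b] h) f

lemma mpd_nil (α : Fin d → ℕ) (f : (Fin d → ℝ) → ℝ) : mpd [] α f = f := rfl

lemma mpd_cons (b : Fin d) (l : List (Fin d)) (α : Fin d → ℕ) (f : (Fin d → ℝ) → ℝ) :
    mpd (b :: l) α f = mpd l α ((pderiv b)^[α b] f) := rfl

lemma mpd_append (l : List (Fin d)) (b : Fin d) (α : Fin d → ℕ) (f : (Fin d → ℝ) → ℝ) :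
    mpd (l ++ [b]) α f = (pderiv b)^[α b] (mpd l α f) := by
  simp [mpd, List.foldl_append]

lemma contDiff_mpd (l : List (Fin d)) {α : Fin d → ℕ} {f : (Fin d → ℝ) → ℝ}
    (hf : ContDiff ℝ (⊤ : ℕ∞) f) : ContDiff ℝ (⊤ : ℕ∞) (mpd l α f) := by
  induction l generalizing f with
  | nil => simpa [mpd]
  | cons b l ih => rw [mpd_cons]; exact ih (contDiff_pderiv_iter hf _)

lemma mpd_congr (l : List (Fin d)) {α β : Fin d → ℕ} (h : ∀ b ∈ l, α b = β b)
    (f : (Fin d → ℝ) → ℝ) : mpd l α f = mpd l β f := by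
  induction l generalizing f with
  | nil => rfl
  | cons b l ih =>
      rw [mpd_cons, mpd_cons, h b List.mem_cons_self]
      exact ih (fun b hb => h b (List.mem_cons_of_mem _ hb)) _

lemma mpd_of_eq_zero (l : List (Fin d)) {α : Fin d → ℕ} (h : ∀ b ∈ l, α b = 0)
    (f : (Fin d → ℝ) → ℝ) : mpd l α f = f := by
  induction l generalizing f with
  | nil => rfl
  | cons b l ih =>
      rw [mpd_cons, h b List.mem_cons_self]
      exact ih (fun b hb => h b (List.mem_cons_of_mem _ hb)) _

lemma pderiv_iter_zero {a : Fin d} (n : ℕ) : (pderiv a)^[n] (fun _ => (0:ℝ)) = fun _ => 0 := by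
  induction n with
  | zero => rfl
  | succ n ih => rw [Function.iterate_succ_apply, show pderiv a (fun _ => (0:ℝ)) = fun _ => 0 from pderiv_const 0, ih]

lemma mpd_zero (l : List (Fin d)) (α : Fin d → ℕ) : mpd l α (fun _ => (0:ℝ)) = fun _ => 0 := by
  induction l with
  | nil => rfl
  | cons b l ih => rw [mpd_cons, pderiv_iter_zero]; exact ih

lemma mpd_const_of_ne (l : List (Fin d)) {α : Fin d → ℕ} (h : ∃ b ∈ l, α b ≠ 0) (c : ℝ) :
    mpd l α (fun _ => c) = fun _ => 0 := by
  induction l with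
  | nil => simp at h
  | cons b l ih =>
      rw [mpd_cons]
      by_cases hb : α b = 0
      · rw [hb]
        simp only [Function.iterate_zero, id]
        obtain ⟨b', hb', hb'0⟩ := h
        rcases List.mem_cons.mp hb' with rfl | hmem
        · exact absurd hb hb'0
        · exact ih ⟨b', hmem, hb'0⟩
      · obtain ⟨n, hn⟩ := Nat.exists_eq_succ_of_ne_zero hb
        rw [hn, Function.iterate_succ_apply, pderiv_const, pderiv_iter_zero, mpd_zero]

lemma pderiv_iter_lin {a : Fin d} {f g : (Fin d → ℝ) → ℝ} (hf : ContDiff ℝ (⊤ : ℕ∞) f)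
    (hg : ContDiff ℝ (⊤ : ℕ∞) g) (c : ℝ) (n : ℕ) :
    (pderiv a)^[n] (fun x => c * f x + g x) =
      fun x => c * (pderiv a)^[n] f x + (pderiv a)^[n] g x := by
  induction n with
  | zero => rfl
  | succ n ih =>
      rw [Function.iterate_succ_apply', ih, Function.iterate_succ_apply',
        Function.iterate_succ_apply',
        pderiv_lin ((contDiff_pderiv_iter hf n).differentiable (by simp))
          ((contDiff_pderiv_iter hg n).differentiable (by simp)) c]

lemma mpd_lin (l : List (Fin d)) {f g : (Fin d → ℝ) → ℝ} (hf : ContDiff ℝ (⊤ : ℕ∞) f)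
    (hg : ContDiff ℝ (⊤ : ℕ∞) g) (c : ℝ) (α : Fin d → ℕ) :
    mpd l α (fun x => c * f x + g x) = fun x => c * mpd l α f x + mpd l α g x := by
  induction l generalizing f g with
  | nil => rfl
  | cons b l ih =>
      rw [mpd_cons, pderiv_iter_lin hf hg c, ih (contDiff_pderiv_iter hf _) (contDiff_pderiv_iter hg _),
        mpd_cons, mpd_cons]

lemma pascal_sum (u v : ℕ → ℝ) (n : ℕ) :
    ∑ k ∈ Finset.range (n + 1),
        (n.choose k : ℝ) * (u (k + 1) * v (n - k) + u k * v (n - k + 1)) =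
      ∑ k ∈ Finset.range (n + 2), ((n + 1).choose k : ℝ) * (u k * v (n + 1 - k)) := by
  rw [Finset.sum_range_succ' (fun k => (((n + 1).choose k : ℕ) : ℝ) * (u k * v (n + 1 - k))) (n + 1)]
  simp only [Nat.choose_succ_succ, Nat.cast_add, add_mul, Finset.sum_add_distrib,
    Nat.choose_zero_right, Nat.cast_one, one_mul, Nat.succ_sub_succ, Nat.sub_zero]
  rw [Finset.sum_range_succ (fun k => ((n.choose (k + 1) : ℕ) : ℝ) * (u (k + 1) * v (n - k)))]
  simp only [mul_add, Finset.sum_add_distrib, Nat.choose_succ_self, Nat.cast_zero, zero_mul,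
    add_zero]
  have h2 : ∑ k ∈ Finset.range (n + 1), (n.choose k : ℝ) * (u k * v (n - k + 1)) =
      (∑ k ∈ Finset.range n, (n.choose (k + 1) : ℝ) * (u (k + 1) * v (n - k))) +
        u 0 * v (n + 1) := by
    rw [Finset.sum_range_succ' (fun k => ((n.choose k : ℕ) : ℝ) * (u k * v (n - k + 1))) n]
    simp only [Nat.choose_zero_right, Nat.cast_one, one_mul, Nat.sub_zero]
    congr 1
    refine Finset.sum_congr rfl fun k hk => ?_
    have : n - (k + 1) + 1 = n - k := by
      have := Finset.mem_range.mp hk; omega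
    rw [this]
  rw [h2]
  ring

lemma pderiv_iter_leibniz {a : Fin d} {f g : (Fin d → ℝ) → ℝ} (hf : ContDiff ℝ (⊤ : ℕ∞) f)
    (hg : ContDiff ℝ (⊤ : ℕ∞) g) (n : ℕ) :
    (pderiv a)^[n] (fun x => f x * g x) =
      fun x => ∑ k ∈ Finset.range (n + 1),
        ((n.choose k : ℝ)) * ((pderiv a)^[k] f x * (pderiv a)^[n - k] g x) := by
  induction n with
  | zero => simp
  | succ n ih =>
      rw [Function.iterate_succ_apply', ih,
        pderiv_sum (Finset.range (n + 1)) _ (fun k _ => by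
          have h1 := (contDiff_pderiv_iter (a := a) hf k).differentiable (by simp)
          have h2 := (contDiff_pderiv_iter (a := a) hg (n - k)).differentiable (by simp)
          exact ((h1.mul h2).const_mul _))]
      funext x
      have key : ∀ k, pderiv a (fun x => ((n.choose k : ℝ)) *
            ((pderiv a)^[k] f x * (pderiv a)^[n - k] g x)) x =
          ((n.choose k : ℝ)) * ((pderiv a)^[k + 1] f x * (pderiv a)^[n - k] g x
            + (pderiv a)^[k] f x * (pderiv a)^[n - k + 1] g x) := by
        intro k
        have h1 := (contDiff_pderiv_iter (a := a) hf k).differentiable (by simp)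
        have h2 := (contDiff_pderiv_iter (a := a) hg (n - k)).differentiable (by simp)
        have e1 : pderiv a (fun x => ((n.choose k : ℝ)) *
              ((pderiv a)^[k] f x * (pderiv a)^[n - k] g x)) =
            fun x => ((n.choose k : ℝ)) *
              pderiv a (fun x => (pderiv a)^[k] f x * (pderiv a)^[n - k] g x) x := by
          have := pderiv_lin (a := a) (h1.fun_mul h2) (g := fun _ => 0) (by simp [differentiable_const]) ((n.choose k : ℝ))
          simpa [pderiv_const] using this
        rw [e1, pderiv_mul h1 h2]
        rw [Function.iterate_succ_apply', Function.iterate_succ_apply']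
      simp only [key]
      exact pascal_sum (fun k => (pderiv a)^[k] f x) (fun k => (pderiv a)^[k] g x) n

lemma pderiv_iter_sum {a : Fin d} {ι : Type*} (s : Finset ι) (F : ι → (Fin d → ℝ) → ℝ)
    (h : ∀ i ∈ s, ContDiff ℝ (⊤ : ℕ∞) (F i)) (n : ℕ) :
    (pderiv a)^[n] (fun x => ∑ i ∈ s, F i x) = fun x => ∑ i ∈ s, (pderiv a)^[n] (F i) x := by
  induction n with
  | zero => rfl
  | succ n ih =>
      rw [Function.iterate_succ_apply', ih,
        pderiv_sum s _ (fun i hi => (contDiff_pderiv_iter (h i hi) n).differentiable (by simp))]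
      funext x
      refine Finset.sum_congr rfl fun i hi => ?_
      rw [Function.iterate_succ_apply']

lemma pderiv_iter_const_mul {a : Fin d} {h : (Fin d → ℝ) → ℝ} (hh : ContDiff ℝ (⊤ : ℕ∞) h) (c : ℝ)
    (n : ℕ) : (pderiv a)^[n] (fun x => c * h x) = fun x => c * (pderiv a)^[n] h x := by
  have := pderiv_iter_lin (a := a) (f := h) (g := fun _ => (0:ℝ)) hh contDiff_const c n
  simpa [pderiv_iter_zero] using this

/-- index set for the Leibniz formula -/
noncomputable def I (l : List (Fin d)) (α : Fin d → ℕ) : Finset (Fin d → ℕ) :=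
  Fintype.piFinset (fun c => if c ∈ l then Finset.Iic (α c) else ({0} : Finset ℕ))

lemma mem_I {l : List (Fin d)} {α β : Fin d → ℕ} :
    β ∈ I l α ↔ ∀ c, (c ∈ l → β c ≤ α c) ∧ (c ∉ l → β c = 0) := by
  simp only [I, Fintype.mem_piFinset]
  refine forall_congr' fun c => ?_
  by_cases hc : c ∈ l <;> simp [hc]

lemma coeff_update (α β : Fin d → ℕ) (b : Fin d) (k : ℕ) (hβ : β b = 0) :
    (∏ c, ((α c).choose ((Function.update β b k) c) : ℝ)) =
      ((α b).choose k : ℝ) * ∏ c, ((α c).choose (β c) : ℝ) := by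
  rw [← Finset.mul_prod_erase Finset.univ (fun c => ((α c).choose (β c) : ℝ))
      (Finset.mem_univ b), hβ,
    ← Finset.mul_prod_erase Finset.univ (fun c => ((α c).choose (Function.update β b k c) : ℝ))
      (Finset.mem_univ b), Function.update_self]
  simp only [Nat.choose_zero_right, Nat.cast_one, one_mul]
  congr 1
  refine Finset.prod_congr rfl fun c hc => ?_
  rw [Function.update_of_ne (Finset.mem_erase.mp hc).1]

lemma mpd_leibniz (l : List (Fin d)) (hl : l.Nodup) {f g : (Fin d → ℝ) → ℝ}
    (hf : ContDiff ℝ (⊤ : ℕ∞) f) (hg : ContDiff ℝ (⊤ : ℕ∞) g) (α : Fin d → ℕ) :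
    mpd l α (fun x => f x * g x) =
      fun x => ∑ β ∈ I l α, (∏ c, ((α c).choose (β c) : ℝ)) *
        (mpd l β f x * mpd l (fun c => α c - β c) g x) := by
  induction l using List.reverseRecOn with
  | nil =>
      have hI : I ([] : List (Fin d)) α = {fun _ => 0} := by
        ext β
        simp [mem_I, funext_iff]
      rw [hI]
      funext x
      simp [mpd_nil]
  | append_singleton l b ih =>
      have hbl : b ∉ l := fun h =>
        (List.nodup_append'.mp hl).2.2 h (List.mem_singleton_self b)
      have hln : l.Nodup := (List.nodup_append'.mp hl).1
      rw [mpd_append, ih hln]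
      have hsmooth : ∀ β ∈ I l α, ContDiff ℝ (⊤ : ℕ∞) (fun x => (∏ c, ((α c).choose (β c) : ℝ)) *
          (mpd l β f x * mpd l (fun c => α c - β c) g x)) :=
        fun β _ => (contDiff_const.mul ((contDiff_mpd l hf).mul (contDiff_mpd l hg)))
      rw [pderiv_iter_sum (I l α) _ hsmooth]
      funext x
      have key : ∀ β ∈ I l α, (pderiv b)^[α b] (fun x => (∏ c, ((α c).choose (β c) : ℝ)) *
            (mpd l β f x * mpd l (fun c => α c - β c) g x)) x =
          ∑ k ∈ Finset.range (α b + 1), (∏ c, ((α c).choose (β c) : ℝ)) * ((α b).choose k : ℝ) *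
            (mpd (l ++ [b]) (Function.update β b k) f x *
              mpd (l ++ [b]) (fun c => α c - Function.update β b k c) g x) := by
        intro β hβ
        have hβb : β b = 0 := (mem_I.mp hβ b).2 hbl
        have h1 : ContDiff ℝ (⊤ : ℕ∞) (mpd l β f) := contDiff_mpd l hf
        have h2 : ContDiff ℝ (⊤ : ℕ∞) (mpd l (fun c => α c - β c) g) := contDiff_mpd l hg
        rw [pderiv_iter_const_mul (h1.mul h2), pderiv_iter_leibniz h1 h2]
        simp only [Finset.mul_sum]
        refine Finset.sum_congr rfl fun k hk => ?_
        have e1 : mpd (l ++ [b]) (Function.update β b k) f = (pderiv b)^[k] (mpd l β f) := by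
          rw [mpd_append, Function.update_self,
            mpd_congr l (fun c hc => Function.update_of_ne (fun h => hbl (by rwa [h] at hc)) _ _) f]
        have e2 : mpd (l ++ [b]) (fun c => α c - Function.update β b k c) g =
            (pderiv b)^[α b - k] (mpd l (fun c => α c - β c) g) := by
          rw [mpd_append]
          have h3 : α b - Function.update β b k b = α b - k := by
            rw [Function.update_self]
          rw [h3, mpd_congr l (β := fun c => α c - β c)
            (fun c hc => by rw [Function.update_of_ne (fun h => hbl (by rwa [h] at hc))]) g]
        rw [e1, e2]
        ring
      rw [Finset.sum_congr rfl key, ← Finset.sum_product']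
      refine Finset.sum_nbij' (fun p => Function.update p.1 b p.2)
        (fun β' => (Function.update β' b 0, β' b)) ?_ ?_ ?_ ?_ ?_
      · rintro ⟨β, k⟩ hp
        rw [Finset.mem_product] at hp
        obtain ⟨h1, h2⟩ := hp
        dsimp only
        rw [mem_I]
        intro c
        by_cases hcb : c = b
        · subst hcb
          rw [Function.update_self]
          refine ⟨fun _ => Nat.lt_succ_iff.mp (Finset.mem_range.mp h2), fun hc => ?_⟩
          exact absurd (by simp : c ∈ l ++ [c]) hc
        · rw [Function.update_of_ne hcb]
          refine ⟨fun hc => ?_, fun hc => ?_⟩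
          · rcases List.mem_append.mp hc with h | h
            · exact (mem_I.mp h1 c).1 h
            · exact absurd (List.mem_singleton.mp h) hcb
          · exact (mem_I.mp h1 c).2 (fun h => hc (List.mem_append_left _ h))
      · intro β' hβ'
        refine Finset.mem_product.mpr ⟨?_, ?_⟩
        · show Function.update β' b 0 ∈ I l α
          rw [mem_I]
          intro c
          by_cases hcb : c = b
          · subst hcb
            rw [Function.update_self]
            exact ⟨fun hc => (hbl hc).elim, fun _ => rfl⟩
          · rw [Function.update_of_ne hcb]
            refine ⟨fun hc => (mem_I.mp hβ' c).1 (List.mem_append_left _ hc), fun hc => ?_⟩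
            refine (mem_I.mp hβ' c).2 (fun h => ?_)
            rcases List.mem_append.mp h with h | h
            · exact hc h
            · exact hcb (List.mem_singleton.mp h)
        · show β' b ∈ Finset.range (α b + 1)
          rw [Finset.mem_range, Nat.lt_succ_iff]
          exact (mem_I.mp hβ' b).1 (List.mem_append_right _ (List.mem_singleton_self b))
      · rintro ⟨β, k⟩ hp
        rw [Finset.mem_product] at hp
        have hβb : β b = 0 := (mem_I.mp hp.1 b).2 hbl
        dsimp only
        have h4 : Function.update (Function.update β b k) b 0 = β := by
          rw [Function.update_idem, ← hβb, Function.update_eq_self]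
        rw [Function.update_self, h4]
      · intro β' hβ'
        dsimp only
        rw [Function.update_idem, Function.update_eq_self]
      · rintro ⟨β, k⟩ hp
        rw [Finset.mem_product] at hp
        have hβb : β b = 0 := (mem_I.mp hp.1 b).2 hbl
        dsimp only
        rw [coeff_update α β b k hβb]
        ring
lemma coef_split {d : ℕ} (α β : Fin d → ℕ) (h : ∀ b, β b ≤ α b) :
    (((∏ b, (α b).factorial : ℕ) : ℝ))⁻¹ * ∏ b, (((α b).choose (β b) : ℕ) : ℝ) =
      (((∏ b, (β b).factorial : ℕ) : ℝ))⁻¹ *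
        (((∏ b, (α b - β b).factorial : ℕ) : ℝ))⁻¹ := by
  push_cast
  rw [← Finset.prod_inv_distrib, ← Finset.prod_inv_distrib, ← Finset.prod_inv_distrib,
    ← Finset.prod_mul_distrib, ← Finset.prod_mul_distrib]
  refine Finset.prod_congr rfl fun b _ => ?_
  have hb := Nat.choose_mul_factorial_mul_factorial (h b)
  have h1 : ((α b).factorial : ℝ) ≠ 0 := Nat.cast_ne_zero.mpr (α b).factorial_ne_zero
  have h2 : ((β b).factorial : ℝ) ≠ 0 := Nat.cast_ne_zero.mpr (β b).factorial_ne_zero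
  have h3 : ((α b - β b).factorial : ℝ) ≠ 0 := Nat.cast_ne_zero.mpr (α b - β b).factorial_ne_zero
  field_simp
  exact_mod_cast hb

lemma multiPDeriv_eq {d : ℕ} (α : Fin d → ℕ) (f : (Fin d → ℝ) → ℝ) :
    multiPDeriv α f = mpd (List.finRange d) α f := rfl

lemma I_finRange {d : ℕ} (α : Fin d → ℕ) :
    I (List.finRange d) α = Fintype.piFinset fun b => Finset.Iic (α b) := by
  simp [I]

lemma multiPDeriv_mul {d : ℕ} {f g : (Fin d → ℝ) → ℝ} (hf : ContDiff ℝ (⊤ : ℕ∞) f)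
    (hg : ContDiff ℝ (⊤ : ℕ∞) g) (α : Fin d → ℕ) :
    multiPDeriv α (fun x => f x * g x) =
      fun x => ∑ β ∈ Fintype.piFinset (fun b => Finset.Iic (α b)),
        (∏ c, ((α c).choose (β c) : ℝ)) *
          (multiPDeriv β f x * multiPDeriv (fun c => α c - β c) g x) := by
  rw [multiPDeriv_eq, mpd_leibniz _ (List.nodup_finRange d) hf hg, I_finRange]
  rfl

lemma eps_prod_add {d : ℕ} {A : Type*} [CommRing A] (ε : Fin d → A) (β γ : Fin d → ℕ) :
    (∏ b, ε b ^ β b) * ∏ b, ε b ^ γ b = ∏ b, ε b ^ (β b + γ b) := by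
  rw [← Finset.prod_mul_distrib]
  exact Finset.prod_congr rfl fun b _ => (pow_add _ _ _).symm


/-- **Grassmannian analytic continuation is an `ℝ`-algebra homomorphism**: for nilpotent
`ε₁, …, ε_d` in a commutative unital `ℝ`-algebra `A` and `y₀ ∈ ℝ^d`, the map
`φ(f) = ∑_α (1/α!) (∂^α f)(y₀) ε^α` is `ℝ`-linear on smooth functions, sends `1` to `1`,
and is multiplicative on smooth functions. -/
theorem grassmannCont_algHom {d : ℕ} (A : Type*) [CommRing A] [Algebra ℝ A]
    (y₀ : Fin d → ℝ) (ε : Fin d → A) (hε : ∀ b, IsNilpotent (ε b)) :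
    grassmannCont A y₀ ε (fun _ => 1) = 1 ∧
      (∀ f g : (Fin d → ℝ) → ℝ, ContDiff ℝ (⊤ : ℕ∞) f → ContDiff ℝ (⊤ : ℕ∞) g → ∀ c : ℝ,
        grassmannCont A y₀ ε (fun x => c * f x + g x) =
          c • grassmannCont A y₀ ε f + grassmannCont A y₀ ε g) ∧
      (∀ f g : (Fin d → ℝ) → ℝ, ContDiff ℝ (⊤ : ℕ∞) f → ContDiff ℝ (⊤ : ℕ∞) g →
        grassmannCont A y₀ ε (fun x => f x * g x) =
          grassmannCont A y₀ ε f * grassmannCont A y₀ ε g) := by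
  classical
  choose N hN using hε
  set T : Finset (Fin d → ℕ) := Fintype.piFinset fun b => Finset.range (2 * N b + 1) with hT
  have hTzero : ∀ α : Fin d → ℕ, α ∉ T → (∏ b, ε b ^ α b) = 0 := by
    intro α hα
    rw [hT, Fintype.mem_piFinset] at hα
    push_neg at hα
    obtain ⟨b, hb⟩ := hα
    rw [Finset.mem_range, not_lt] at hb
    exact Finset.prod_eq_zero (Finset.mem_univ b) (pow_eq_zero_of_le (by omega) (hN b))
  have hrep : ∀ f : (Fin d → ℝ) → ℝ, grassmannCont A y₀ ε f =
      ∑ α ∈ T, ((((∏ b, (α b).factorial : ℕ) : ℝ))⁻¹ * multiPDeriv α f y₀) • ∏ b, ε b ^ α b := by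
    intro f
    refine finsum_eq_finset_sum_of_support_subset _ fun α hα => ?_
    by_contra hmem
    exact Function.mem_support.mp hα (by rw [hTzero α hmem, smul_zero])
  refine ⟨?_, ?_, ?_⟩
  · -- sends 1 to 1
    rw [grassmannCont, finsum_eq_single _ (fun _ => 0 : Fin d → ℕ) ?_]
    · have h0 : multiPDeriv (fun _ => 0 : Fin d → ℕ) (fun _ => (1 : ℝ)) = fun _ => 1 :=
        mpd_of_eq_zero (List.finRange d) (fun b _ => rfl) _
      simp [h0]
    · intro α hα
      have hb : ∃ b, α b ≠ 0 := by
        by_contra h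
        push_neg at h
        exact hα (funext h)
      obtain ⟨b, hb⟩ := hb
      have hz : multiPDeriv α (fun _ => (1 : ℝ)) = fun _ => 0 :=
        mpd_const_of_ne _ ⟨b, List.mem_finRange b, hb⟩ 1
      simp [hz]
  · -- linearity
    intro f g hf hg c
    rw [hrep, hrep, hrep, Finset.smul_sum, ← Finset.sum_add_distrib]
    refine Finset.sum_congr rfl fun α _ => ?_
    have hlin : multiPDeriv α (fun x => c * f x + g x) =
        fun x => c * multiPDeriv α f x + multiPDeriv α g x := mpd_lin _ hf hg c α
    rw [hlin]
    set k : ℝ := (((∏ b, (α b).factorial : ℕ) : ℝ))⁻¹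
    have hsc : k * (c * multiPDeriv α f y₀ + multiPDeriv α g y₀) =
        c * (k * multiPDeriv α f y₀) + k * multiPDeriv α g y₀ := by ring
    rw [hsc, add_smul, mul_smul]
  · -- multiplicativity
    intro f g hf hg
    rw [hrep, hrep, hrep, Finset.sum_mul_sum]
    have step1 : ∀ α ∈ T,
        ((((∏ b, (α b).factorial : ℕ) : ℝ))⁻¹ * multiPDeriv α (fun x => f x * g x) y₀) •
            ∏ b, ε b ^ α b =
          ∑ β ∈ T, ((((∏ b, (α b).factorial : ℕ) : ℝ))⁻¹ *
            ((∏ c, ((α c).choose (β c) : ℝ)) *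
              (multiPDeriv β f y₀ * multiPDeriv (fun c => α c - β c) g y₀))) •
            ∏ b, ε b ^ α b := by
      intro α hα
      rw [multiPDeriv_mul hf hg]
      have hsub : Fintype.piFinset (fun b => Finset.Iic (α b)) ⊆ T := by
        intro β hβ
        rw [Fintype.mem_piFinset] at hβ ⊢
        intro b
        have h1 := Finset.mem_Iic.mp (hβ b)
        have h2 := Finset.mem_range.mp ((Fintype.mem_piFinset.mp hα) b)
        rw [Finset.mem_range]
        omega
      rw [Finset.mul_sum, Finset.sum_smul,
        ← Finset.sum_subset hsub (fun β _ hβ => ?_)]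
      obtain ⟨b, hb⟩ : ∃ b, α b < β b := by
        by_contra h
        push_neg at h
        exact hβ (Fintype.mem_piFinset.mpr fun b => Finset.mem_Iic.mpr (h b))
      have hch : (∏ c, ((α c).choose (β c) : ℝ)) = 0 :=
        Finset.prod_eq_zero (Finset.mem_univ b)
          (by rw [Nat.choose_eq_zero_of_lt hb, Nat.cast_zero])
      rw [hch, zero_mul, mul_zero, zero_smul]
    rw [Finset.sum_congr rfl step1, ← Finset.sum_product', ← Finset.sum_product']
    have hzL : ∀ p ∈ T ×ˢ T, p ∉ (T ×ˢ T).filter (fun p : (Fin d → ℕ) × (Fin d → ℕ) =>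
        ∀ b, p.2 b ≤ p.1 b) →
        ((((∏ b, (p.1 b).factorial : ℕ) : ℝ))⁻¹ *
          ((∏ c, ((p.1 c).choose (p.2 c) : ℝ)) *
            (multiPDeriv p.2 f y₀ * multiPDeriv (fun c => p.1 c - p.2 c) g y₀))) •
          (∏ b, ε b ^ p.1 b) = 0 := by
      rintro ⟨α, β⟩ hp hnp
      obtain ⟨b, hb⟩ : ∃ b, α b < β b := by
        by_contra h
        push_neg at h
        exact hnp (Finset.mem_filter.mpr ⟨hp, h⟩)
      have hch : (∏ c, ((α c).choose (β c) : ℝ)) = 0 :=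
        Finset.prod_eq_zero (Finset.mem_univ b)
          (by rw [Nat.choose_eq_zero_of_lt hb, Nat.cast_zero])
      dsimp only
      rw [hch, zero_mul, mul_zero, zero_smul]
    have hzR : ∀ p ∈ T ×ˢ T, p ∉ (T ×ˢ T).filter (fun p : (Fin d → ℕ) × (Fin d → ℕ) =>
        (fun b => p.1 b + p.2 b) ∈ T) →
        ((((∏ b, (p.1 b).factorial : ℕ) : ℝ))⁻¹ * multiPDeriv p.1 f y₀) • (∏ b, ε b ^ p.1 b) *
          (((((∏ b, (p.2 b).factorial : ℕ) : ℝ))⁻¹ * multiPDeriv p.2 g y₀) •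
            ∏ b, ε b ^ p.2 b) = 0 := by
      rintro ⟨β, γ⟩ hp hnp
      have hs : (fun b => β b + γ b) ∉ T := by
        intro h
        exact hnp (Finset.mem_filter.mpr ⟨hp, h⟩)
      dsimp only
      rw [smul_mul_smul_comm, eps_prod_add, hTzero _ hs, smul_zero]
    rw [← Finset.sum_subset (Finset.filter_subset _ (T ×ˢ T)) hzL,
      ← Finset.sum_subset (Finset.filter_subset _ (T ×ˢ T)) hzR]
    refine Finset.sum_nbij' (fun p => (p.2, fun b => p.1 b - p.2 b))
      (fun q => ((fun b => q.1 b + q.2 b), q.1)) ?_ ?_ ?_ ?_ ?_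
    · rintro ⟨α, β⟩ hp
      rw [Finset.mem_filter, Finset.mem_product] at hp
      obtain ⟨⟨hαT, hβT⟩, hle⟩ := hp
      dsimp only at hαT hβT hle ⊢
      rw [Finset.mem_filter, Finset.mem_product]
      refine ⟨⟨hβT, ?_⟩, ?_⟩
      · rw [Fintype.mem_piFinset] at hαT ⊢
        intro b
        have h1 := Finset.mem_range.mp (hαT b)
        have h2 := hle b
        rw [Finset.mem_range]
        show α b - β b < 2 * N b + 1
        omega
      · have h1 : (fun b => β b + (α b - β b)) = α := funext fun b => by
          have := hle b; omega
        dsimp only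
        rw [h1]
        exact hαT
    · rintro ⟨β, γ⟩ hq
      rw [Finset.mem_filter, Finset.mem_product] at hq
      obtain ⟨⟨hβT, hγT⟩, hsT⟩ := hq
      rw [Finset.mem_filter, Finset.mem_product]
      exact ⟨⟨hsT, hβT⟩, fun b => by dsimp only; omega⟩
    · rintro ⟨α, β⟩ hp
      rw [Finset.mem_filter, Finset.mem_product] at hp
      have hle : ∀ b, β b ≤ α b := fun b => by have := hp.2 b; dsimp only at this; omega
      have h1 : (fun b => β b + (α b - β b)) = α := funext fun b => by
        have := hle b; omega
      exact Prod.ext h1 rfl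
    · rintro ⟨β, γ⟩ hq
      exact Prod.ext rfl (funext fun b => by dsimp only; omega)
    · rintro ⟨α, β⟩ hp
      rw [Finset.mem_filter, Finset.mem_product] at hp
      have hle : ∀ b, β b ≤ α b := fun b => by have := hp.2 b; dsimp only at this; omega
      dsimp only
      rw [smul_mul_smul_comm, eps_prod_add]
      have h2 : (∏ b, ε b ^ (β b + (α b - β b))) = ∏ b, ε b ^ α b :=
        Finset.prod_congr rfl fun b _ => by
          have := hle b
          congr 1
          omega
      rw [h2]
      have cs := coef_split α β hle
      congr 1
      linear_combination (multiPDeriv β f y₀ * multiPDeriv (fun c => α c - β c) g y₀) * cs
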